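/- In the generalized Witt algebra W with basis {L_α : α ∈ Γ} and bracket [L_α, L_β] = (β−α)L_{α+β}, if v = Σ_ρ a(ρ) L_ρ ⊗ L_{−ρ} (finitely supported) satisfies L_1·v = 0 under the diagonal adjoint action, then (ρ+1)a(ρ) = (ρ−2)a(ρ−1) for all ρ ∈ Γ. -/

import Mathlib

open Finsupp TensorProduct

/-- Bracket of the generalized Witt algebra `[L_α, L_β] = (β−α)L_{α+β}`. -/
noncomputable def bkW {F : Type*} [Field F] (Γ : AddSubgroup F) :
    (Γ →₀ F) →ₗ[F] (Γ →₀ F) →ₗ[F] (Γ →₀ F) :=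
  Finsupp.lsum F fun α => LinearMap.toSpanSingleton F _
    (Finsupp.lsum F fun β =>
      (((β : F) - (α : F)) • Finsupp.lsingle (α + β) : F →ₗ[F] _))

/-- Diagonal adjoint action of `W` on `W ⊗ W`. -/
noncomputable def actW {F : Type*} [Field F] (Γ : AddSubgroup F) (x : Γ →₀ F) :
    ((Γ →₀ F) ⊗[F] (Γ →₀ F)) →ₗ[F] ((Γ →₀ F) ⊗[F] (Γ →₀ F)) :=
  LinearMap.rTensor _ (bkW Γ x) + LinearMap.lTensor _ (bkW Γ x)

noncomputable instance instZeroTensorW {F : Type*} [Field F] (Γ : AddSubgroup F) :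
    Zero ((Γ →₀ F) ⊗[F] (Γ →₀ F)) :=
  ⟨(inferInstance : AddCommMonoid ((Γ →₀ F) ⊗[F] (Γ →₀ F))).zero⟩

/-! The coefficient of `L_σ ⊗ L_{1-σ}` in `L_1·v` receives exactly two contributions:
`a(σ-1)(σ-2)` from `[L_1, L_{σ-1}] ⊗ L_{1-σ}` and `-a(σ)(σ+1)` from `L_σ ⊗ [L_1, L_{-σ}]`.
Reading `W ⊗ W` as `Γ × Γ →₀ F` makes this coefficient a linear functional, which commutes
with the finite sum defining `v`. -/

section
variable {F : Type*} [Field F] {Γ : AddSubgroup F}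

theorem bkW_single_single (α β : Γ) :
    bkW Γ (single α 1) (single β 1) = single (α + β) ((β : F) - α) := by
  simp [bkW, LinearMap.toSpanSingleton_apply]

theorem finsuppTensorFinsupp'_actW_tmul_apply (x u w : Γ →₀ F) (σ τ : Γ) :
    finsuppTensorFinsupp' F Γ Γ (actW Γ x (u ⊗ₜ w)) (σ, τ)
      = bkW Γ x u σ * w τ + u σ * bkW Γ x w τ := by
  simp [actW]

open Classical in
theorem finsuppTensorFinsupp'_actW_single_tmul_single_neg_apply (α ρ σ : Γ) :
    finsuppTensorFinsupp' F Γ Γ (actW Γ (single α 1) (single ρ 1 ⊗ₜ single (-ρ) 1)) (σ, α - σ)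
      = (if ρ = σ - α then (σ : F) - 2 * α else 0) + (if ρ = σ then -((σ : F) + α) else 0) := by
  rw [finsuppTensorFinsupp'_actW_tmul_apply, bkW_single_single, bkW_single_single]
  have h₀ : α + ρ = σ ↔ ρ = σ - α := eq_sub_iff_add_eq'.symm
  have h₁ : -ρ = α - σ ↔ ρ = σ - α := by rw [neg_eq_iff_eq_neg, neg_sub]
  have h₂ : α + -ρ = α - σ ↔ ρ = σ := by rw [← sub_eq_add_neg, sub_right_inj, eq_comm]
  simp only [single_apply, h₀, h₁, h₂]
  split_ifs with hα hσ hσ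
  · subst hσ
    obtain rfl : α = 0 := sub_eq_self.mp hα.symm
    push_cast; ring
  · subst hα; push_cast; ring
  · subst hσ; push_cast; ring
  · ring

theorem finsuppTensorFinsupp'_actW_single_finsum_apply (a : Γ → F)
    (hfin : (Function.support a).Finite) (α σ : Γ) :
    finsuppTensorFinsupp' F Γ Γ
        (actW Γ (single α 1) (∑ᶠ ρ : Γ, a ρ • (single ρ (1 : F) ⊗ₜ[F] single (-ρ) (1 : F))))
        (σ, α - σ)
      = ((σ : F) - 2 * α) * a (σ - α) - ((σ : F) + α) * a σ := by
  classical
  let coeff := Finsupp.lapply (σ, α - σ) ∘ₗ (finsuppTensorFinsupp' F Γ Γ).toLinearMap ∘ₗ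
    actW Γ (single α 1)
  let diag : Γ → (Γ →₀ F) ⊗[F] (Γ →₀ F) := fun ρ => single ρ 1 ⊗ₜ single (-ρ) 1
  have hsupp : (Function.support fun ρ => a ρ • diag ρ).Finite :=
    hfin.subset (Function.support_smul_subset_left a diag)
  change coeff _ = _
  rw [map_finsum coeff hsupp]
  simp only [coeff, diag, LinearMap.comp_apply, map_smul, LinearEquiv.coe_coe,
    Finsupp.lapply_apply, finsuppTensorFinsupp'_actW_single_tmul_single_neg_apply, smul_eq_mul]
  rw [finsum_eq_sum_of_support_subset (s := {σ - α, σ}) _ ?_]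
  · simp only [mul_add, mul_ite, mul_zero, Finset.sum_add_distrib, Finset.sum_ite_eq',
      Finset.mem_insert, Finset.mem_singleton, true_or, or_true, ↓reduceIte]
    ring
  · intro ρ hρ
    by_contra h
    simp_all

end

theorem L1_annihilates_diagonal_vector
    {F : Type*} [Field F] (Γ : AddSubgroup F) (h1 : (1 : F) ∈ Γ)
    (a : Γ → F) (hfin : (Function.support a).Finite)
    (hv : actW Γ (Finsupp.single (⟨1, h1⟩ : Γ) (1 : F))
        (∑ᶠ ρ : Γ, a ρ • ((Finsupp.single ρ (1 : F)) ⊗ₜ[F]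
          (Finsupp.single (-ρ) (1 : F)))) = 0) :
    ∀ ρ : Γ, ((ρ : F) + 1) * a ρ = ((ρ : F) - 2) * a (ρ - ⟨1, h1⟩) := by
  intro ρ
  have hcoeff := finsuppTensorFinsupp'_actW_single_finsum_apply a hfin ⟨1, h1⟩ ρ
  rw [hv, map_zero, Finsupp.coe_zero, Pi.zero_apply] at hcoeff
  linear_combination hcoeff
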